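/- arXiv:0907.0403 — 5 statements merged into one kernel-verified Lean document; each statement's English description precedes it below -/
import Mathlib

section
/- Monotonicity of positive formulas: For any positive epistemic formula φ (built from atoms, ∧, ∨, and common-knowledge operators C_G, with no negation) and any two H-compliant states (V,M) ⊆ (V',M') (componentwise inclusion), if (V,M) ⊨_H φ then (V',M') ⊨_H φ. -/
/-!
Monotonicity is proved by induction on the formula; only the case `C_G ψ` needs an idea.
A `∼_G`-chain starting from the larger state `(V', M')` is simulated, step by step, by a chain
starting from `(V, M)`: a state `t` below `s` is answered by player `i`'s restriction of `t`,
which keeps only the atoms of `i` and the messages addressed to `i` (plus their facts), so it is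
`∼_i`-equivalent to `t` and lies below every `s'` with `s ∼_i s'`. The simulating chain ends in a
compliant state below the endpoint, where `ψ` holds by the induction hypothesis.
-/

structure Msg (P A : Type) where
  sender : P
  grp : Set P
  fact : A

inductive Form (P A : Type) where
  | atom : A → Form P A
  | neg  : Form P A → Form P A
  | and  : Form P A → Form P A → Form P A
  | or   : Form P A → Form P A → Form P A
  | ck   : Set P → Form P A → Form P A

/-- The negation-free (positive) fragment L⁺. -/
def Positive {P A : Type} : Form P A → Prop
  | .atom _ => True
  | .neg _ => False
  | .and φ ψ => Positive φ ∧ Positive ψ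
  | .or φ ψ => Positive φ ∧ Positive ψ
  | .ck _ φ => Positive φ

/-- Atoms occurring in a formula. -/
def FactsF {P A : Type} : Form P A → Set A
  | .atom p => {p}
  | .neg φ => FactsF φ
  | .and φ ψ => FactsF φ ∪ FactsF ψ
  | .or φ ψ => FactsF φ ∪ FactsF ψ
  | .ck _ φ => FactsF φ

/-- Facts occurring in a set of messages. -/
def Facts {P A : Type} (M : Set (Msg P A)) : Set A := {p | ∃ m ∈ M, m.fact = p}

/-- A state in the telling setting: messages (i,A,p) with i ∈ A, p ∈ At_i
    (ownership given by `owner`), and Facts(M) ⊆ V. -/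
def TState {P A : Type} (owner : A → P) (V : Set A) (M : Set (Msg P A)) : Prop :=
  ∀ m ∈ M, m.sender ∈ m.grp ∧ owner m.fact = m.sender ∧ m.fact ∈ V

/-- All messages are H-compliant. -/
def HComp {P A : Type} (H : Set (Set P)) (M : Set (Msg P A)) : Prop :=
  ∀ m ∈ M, m.grp ∈ H

/-- Indistinguishability for player i: equality of (V_i, M_i). -/
def indist {P A : Type} (owner : A → P) (i : P)
    (s t : Set A × Set (Msg P A)) : Prop :=
  {p ∈ s.1 | owner p = i} = {p ∈ t.1 | owner p = i} ∧
  {m ∈ s.2 | i ∈ m.grp} = {m ∈ t.2 | i ∈ m.grp}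

/-- ∼_G: transitive closure of the union of the ∼_i, i ∈ G. -/
def reach {P A : Type} (owner : A → P) (G : Set P) :
    Set A × Set (Msg P A) → Set A × Set (Msg P A) → Prop :=
  Relation.TransGen (fun s t => ∃ i ∈ G, indist owner i s t)

/-- Semantics ⊨_H (telling setting): C_G quantifies over H-compliant telling states. -/
def sat {P A : Type} (owner : A → P) (H : Set (Set P)) :
    Form P A → Set A → Set (Msg P A) → Prop
  | .atom p, V, _ => p ∈ V
  | .neg φ, V, M => ¬ sat owner H φ V M
  | .and φ ψ, V, M => sat owner H φ V M ∧ sat owner H ψ V M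
  | .or φ ψ, V, M => sat owner H φ V M ∨ sat owner H ψ V M
  | .ck G φ, V, M => ∀ V' M', TState owner V' M' → HComp H M' →
      reach owner G (V, M) (V', M') → sat owner H φ V' M'

/-- The complete hypergraph: all nonempty subsets of players. -/
def completeH (P : Type) : Set (Set P) := {B | B.Nonempty}

/-- Iterated knowledge K_{i₁}…K_{i_k} φ along a word. -/
def Kw {P A : Type} (w : List P) (φ : Form P A) : Form P A :=
  w.foldr (fun i ψ => Form.ck {i} ψ) φ

theorem Relation.TransGen.exists_of_simulation {α β : Type*} {r : α → α → Prop}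
    {r' : β → β → Prop} (I : β → α → Prop)
    (hsim : ∀ {a a' b}, r a a' → I b a → ∃ b', I b' a' ∧ r' b b')
    {a a'' : α} {b : β} (h : Relation.TransGen r a a'') (hb : I b a) :
    ∃ b'', I b'' a'' ∧ Relation.TransGen r' b b'' := by
  induction h with
  | single hstep =>
    obtain ⟨b', hb', hr'⟩ := hsim hstep hb
    exact ⟨b', hb', .single hr'⟩
  | tail _ hstep ih =>
    obtain ⟨b', hb', hchain⟩ := ih
    obtain ⟨b'', hb'', hr'⟩ := hsim hstep hb'
    exact ⟨b'', hb'', hchain.tail hr'⟩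

section Monotonicity

variable {P A : Type} (owner : A → P) (H : Set (Set P))

theorem facts_subset_of_tState {V : Set A} {M : Set (Msg P A)} (hS : TState owner V M) :
    Facts M ⊆ V := by
  rintro _ ⟨m, hm, rfl⟩
  exact (hS m hm).2.2

theorem facts_mono {M N : Set (Msg P A)} (h : M ⊆ N) : Facts M ⊆ Facts N := by
  rintro _ ⟨m, hm, rfl⟩
  exact ⟨m, h hm, rfl⟩

theorem HComp.mono {M N : Set (Msg P A)} (hC : HComp H N) (h : M ⊆ N) : HComp H M :=
  fun m hm => hC m (h hm)

def restrict (i : P) (t : Set A × Set (Msg P A)) : Set A × Set (Msg P A) :=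
  ({p ∈ t.1 | owner p = i} ∪ Facts {m ∈ t.2 | i ∈ m.grp}, {m ∈ t.2 | i ∈ m.grp})

variable {owner}

theorem tState_restrict {i : P} {t : Set A × Set (Msg P A)} (ht : TState owner t.1 t.2) :
    TState owner (restrict owner i t).1 (restrict owner i t).2 := fun m hm =>
  ⟨(ht m hm.1).1, (ht m hm.1).2.1, Or.inr ⟨m, hm, rfl⟩⟩

theorem indist_restrict {i : P} {t : Set A × Set (Msg P A)} (ht : TState owner t.1 t.2) :
    indist owner i t (restrict owner i t) := by
  refine ⟨?_, by ext m; simp [restrict]⟩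
  ext p
  constructor
  · rintro ⟨hpt, hpi⟩
    exact ⟨Or.inl ⟨hpt, hpi⟩, hpi⟩
  · rintro ⟨hp, hpi⟩
    exact ⟨hp.elim And.left (facts_subset_of_tState owner ht <| facts_mono (fun _ hm => hm.1) ·),
      hpi⟩

variable (owner)

/-- The slack `Facts t.2` is needed because the intermediate states of a `∼_G`-chain need not
satisfy `Facts M ⊆ V`. -/
def LiesBelow (t s : Set A × Set (Msg P A)) : Prop :=
  TState owner t.1 t.2 ∧ HComp H t.2 ∧ t.2 ⊆ s.2 ∧ t.1 ⊆ s.1 ∪ Facts t.2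

variable {owner H}

theorem LiesBelow.restrict {i : P} {s s' t : Set A × Set (Msg P A)}
    (hss' : indist owner i s s') (ht : LiesBelow owner H t s) :
    LiesBelow owner H (restrict owner i t) s' := by
  obtain ⟨hS, hC, hM, hV⟩ := ht
  obtain ⟨hsV, hsM⟩ := hss'
  refine ⟨tState_restrict hS, hC.mono H (fun _ hm => hm.1), ?_, ?_⟩
  · intro m hm
    have hm' : m ∈ {m ∈ s.2 | i ∈ m.grp} := ⟨hM hm.1, hm.2⟩
    exact (hsM ▸ hm').1
  · rintro p (⟨hpt, hpi⟩ | hpF)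
    · rcases hV hpt with hps | ⟨m, hm, rfl⟩
      · have hp' : p ∈ {p ∈ s.1 | owner p = i} := ⟨hps, hpi⟩
        exact Or.inl (hsV ▸ hp').1
      · obtain ⟨hsend, howner, -⟩ := hS m hm
        exact Or.inr ⟨m, ⟨hm, by rwa [← hpi, howner]⟩, rfl⟩
    · exact Or.inr hpF

theorem LiesBelow.exists_of_reach {G : Set P} {s s'' t : Set A × Set (Msg P A)}
    (hr : reach owner G s s'') (ht : LiesBelow owner H t s) :
    ∃ t'', LiesBelow owner H t'' s'' ∧ reach owner G t t'' :=
  hr.exists_of_simulation (LiesBelow owner H) (fun ⟨i, hi, hss'⟩ ht =>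
    ⟨_, ht.restrict hss', i, hi, indist_restrict ht.1⟩) ht

theorem LiesBelow.subset_of_tState {t s : Set A × Set (Msg P A)} (ht : LiesBelow owner H t s)
    (hs : TState owner s.1 s.2) : t.1 ⊆ s.1 :=
  fun _ hp => (ht.2.2.2 hp).elim id
    (facts_subset_of_tState owner hs <| facts_mono ht.2.2.1 ·)

theorem sat_mono {φ : Form P A} (hφ : Positive φ) {V V' : Set A} {M M' : Set (Msg P A)}
    (hS : TState owner V M) (hC : HComp H M) (hV : V ⊆ V') (hM : M ⊆ M')
    (h : sat owner H φ V M) : sat owner H φ V' M' := by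
  induction φ generalizing V V' M M' with
  | atom p => exact hV h
  | neg ψ _ => exact hφ.elim
  | and φ ψ ihφ ihψ => exact ⟨ihφ hφ.1 hS hC hV hM h.1, ihψ hφ.2 hS hC hV hM h.2⟩
  | or φ ψ ihφ ihψ =>
    exact h.imp (ihφ hφ.1 hS hC hV hM) (ihψ hφ.2 hS hC hV hM)
  | ck G ψ ih =>
    intro V'' M'' hS'' hC'' hr
    have hbelow : LiesBelow owner H (V, M) (V', M') := ⟨hS, hC, hM, fun _ hp => Or.inl (hV hp)⟩
    obtain ⟨t, ht, htr⟩ := hbelow.exists_of_reach hr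
    exact ih hφ ht.1 ht.2.1 (ht.subset_of_tState hS'') ht.2.2.1 (h t.1 t.2 ht.1 ht.2.1 htr)

end Monotonicity

theorem positive_monotone_general {P A : Type} (owner : A → P) (H : Set (Set P))
    (V V' : Set A) (M M' : Set (Msg P A))
    (hS : TState owner V M)
    (hC : HComp H M)
    (hV : V ⊆ V') (hM : M ⊆ M')
    (φ : Form P A) (hφ : Positive φ)
    (h : sat owner H φ V M) : sat owner H φ V' M' :=
  sat_mono hφ hS hC hV hM h

theorem positive_monotone {P A : Type} [Fintype P] (owner : A → P) (H : Set (Set P))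
    (V V' : Set A) (M M' : Set (Msg P A))
    (hS : TState owner V M) (hS' : TState owner V' M')
    (hC : HComp H M) (hC' : HComp H M')
    (hV : V ⊆ V') (hM : M ⊆ M')
    (φ : Form P A) (hφ : Positive φ)
    (h : sat owner H φ V M) : sat owner H φ V' M' :=
  positive_monotone_general owner H V V' M M' hS hC hV hM φ hφ h
end

section
/- Irrelevance of common knowledge of the hypergraph for positive formulas (telling setting): For any H-compliant state (V,M) and any positive formula φ ∈ L⁺, (V,M) ⊨ φ iff (V,M) ⊨_H φ, where ⊨ denotes ⊨_H with H the complete hypergraph (all nonempty subsets of N). -/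
/-! Positive formulas are monotone in the set of states over which `C_G` quantifies, and every
telling state is compliant with the complete hypergraph; this gives `⊨ φ → ⊨_H φ`. Conversely,
deleting the non-`H` messages of a state commutes with every `∼_i` (a player's view of the
restricted state is the restriction of its view), so it maps each state `∼_G`-reachable from
`(V, M)` to an `H`-compliant state `∼_G`-reachable from `(V, M)` itself when `M` is `H`-compliant. -/

section

variable {P A : Type} (owner : A → P)

lemma indist.restrict {H : Set (Set P)} {i : P} {s t : Set A × Set (Msg P A)}
    (h : indist owner i s t) :
    indist owner i (s.1, {m ∈ s.2 | m.grp ∈ H}) (t.1, {m ∈ t.2 | m.grp ∈ H}) := by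
  refine ⟨h.1, Set.ext fun m => ?_⟩
  have hm := Set.ext_iff.mp h.2 m
  simp only [Set.mem_ofPred_eq] at hm ⊢
  tauto

lemma reach.restrict {H : Set (Set P)} {G : Set P} {s t : Set A × Set (Msg P A)}
    (h : reach owner G s t) :
    reach owner G (s.1, {m ∈ s.2 | m.grp ∈ H}) (t.1, {m ∈ t.2 | m.grp ∈ H}) :=
  Relation.TransGen.lift (fun s : Set A × Set (Msg P A) => (s.1, {m ∈ s.2 | m.grp ∈ H}))
    (fun _ _ ⟨i, hi, hin⟩ => ⟨i, hi, hin.restrict owner⟩) _ _ h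

lemma TState.restrict {H : Set (Set P)} {V : Set A} {M : Set (Msg P A)}
    (h : TState owner V M) : TState owner V {m ∈ M | m.grp ∈ H} :=
  fun m hm => h m hm.1

lemma hComp_restrict (H : Set (Set P)) (M : Set (Msg P A)) : HComp H {m ∈ M | m.grp ∈ H} :=
  fun _ hm => hm.2

lemma TState.hComp_completeH {V : Set A} {M : Set (Msg P A)} (h : TState owner V M) :
    HComp (completeH P) M :=
  fun m hm => ⟨m.sender, (h m hm).1⟩

lemma Positive.sat_of_sat_of_hComp_imp {H H' : Set (Set P)}
    (hHH' : ∀ V M, TState owner V M → HComp H M → HComp H' M) :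
    ∀ {φ : Form P A}, Positive φ → ∀ {V M}, sat owner H' φ V M → sat owner H φ V M
  | .atom _, _, _, _, h => h
  | .and _ _, hφ, _, _, h => ⟨hφ.1.sat_of_sat_of_hComp_imp hHH' h.1,
      hφ.2.sat_of_sat_of_hComp_imp hHH' h.2⟩
  | .or _ _, hφ, _, _, h => h.imp (hφ.1.sat_of_sat_of_hComp_imp hHH')
      (hφ.2.sat_of_sat_of_hComp_imp hHH')
  | .ck _ ψ, (hψ : Positive ψ), _, _, h => fun V' M' hT hC hr =>
      hψ.sat_of_sat_of_hComp_imp (φ := ψ) hHH' (h V' M' hT (hHH' V' M' hT hC) hr)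

lemma Positive.sat_of_sat_restrict (H H' : Set (Set P)) :
    ∀ {φ : Form P A}, Positive φ → ∀ {V M},
      sat owner H φ V {m ∈ M | m.grp ∈ H} → sat owner H' φ V M
  | .atom _, _, _, _, h => h
  | .and _ _, hφ, _, _, h => ⟨hφ.1.sat_of_sat_restrict H H' h.1,
      hφ.2.sat_of_sat_restrict H H' h.2⟩
  | .or _ _, hφ, _, _, h => h.imp (hφ.1.sat_of_sat_restrict H H')
      (hφ.2.sat_of_sat_restrict H H')
  | .ck _ ψ, (hψ : Positive ψ), _, _, h => fun V' M' hT _ hr =>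
      hψ.sat_of_sat_restrict (φ := ψ) H H'
        (h V' _ (hT.restrict owner) (hComp_restrict H M') (hr.restrict owner))

end

theorem ck_of_H_irrelevant_positive_general {P A : Type} (owner : A → P)
    (H : Set (Set P)) (V : Set A) (M : Set (Msg P A))
    (hC : HComp H M)
    (φ : Form P A) (hφ : Positive φ) :
    sat owner (completeH P) φ V M ↔ sat owner H φ V M := by
  refine ⟨hφ.sat_of_sat_of_hComp_imp owner fun _ _ hT _ => hT.hComp_completeH owner, fun h => ?_⟩
  have hM : {m ∈ M | m.grp ∈ H} = M := Set.sep_eq_self_iff_mem_true.mpr hC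
  exact hφ.sat_of_sat_restrict owner H (completeH P) (by rwa [hM])

theorem ck_of_H_irrelevant_positive {P A : Type} [Fintype P] (owner : A → P)
    (H : Set (Set P)) (V : Set A) (M : Set (Msg P A))
    (hS : TState owner V M) (hC : HComp H M)
    (φ : Form P A) (hφ : Positive φ) :
    sat owner (completeH P) φ V M ↔ sat owner H φ V M :=
  ck_of_H_irrelevant_positive_general owner H V M hC φ hφ
end

section
/- Distributivity of common knowledge over disjunction of positive formulas: For any φ₁, φ₂ ∈ L⁺, any nonempty group G ⊆ N, and any state (V,M), (V,M) ⊨ C_G(φ₁ ∨ φ₂) iff (V,M) ⊨ C_G φ₁ ∨ C_G φ₂ (with respect to the complete hypergraph). -/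
/-!
For a finite nonempty group `G`, the `G`-core of a telling state keeps only the messages
addressed to all of `G`, their facts, and the facts owned by every member of `G`. Lowering a
state to the `i`-core for each `i ∈ G` in turn is a `∼_G`-path ending at the `G`-core, and each
`∼_i` step with `i ∈ G` preserves everything in the core, so the core is the least telling state
`∼_G`-reachable from the given one. Positive formulas are monotone along inclusion of telling
states (for `C_{G'}` this is the same core argument), so `C_G ψ` holds iff `ψ` holds at the core,
and evaluating at a single state commutes with disjunction.
-/

section

variable {P A : Type} {owner : A → P} {H : Set (Set P)}

def IsCompliantState (owner : A → P) (H : Set (Set P)) (s : Set A × Set (Msg P A)) : Prop :=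
  TState owner s.1 s.2 ∧ HComp H s.2

lemma TState.isCompliantState_completeH {V : Set A} {M : Set (Msg P A)}
    (h : TState owner V M) : IsCompliantState owner (completeH P) (V, M) :=
  ⟨h, fun m hm => ⟨m.sender, (h m hm).1⟩⟩

lemma not_reach_empty {s t : Set A × Set (Msg P A)} : ¬ reach owner ∅ s t := by
  intro h
  obtain ⟨_, ⟨_, hi, _⟩, _⟩ := Relation.TransGen.head'_iff.mp h
  exact hi

def groupCore (owner : A → P) (G : Set P) (s : Set A × Set (Msg P A)) :
    Set A × Set (Msg P A) :=
  ({p ∈ s.1 | ∀ i ∈ G, owner p = i} ∪ Facts {m ∈ s.2 | G ⊆ m.grp}, {m ∈ s.2 | G ⊆ m.grp})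

lemma groupCore_mono (G : Set P) {s t : Set A × Set (Msg P A)} (h : s ≤ t) :
    groupCore owner G s ≤ groupCore owner G t := by
  have hM : {m ∈ s.2 | G ⊆ m.grp} ⊆ {m ∈ t.2 | G ⊆ m.grp} := fun m hm => ⟨h.2 hm.1, hm.2⟩
  refine ⟨Set.union_subset_union (fun p hp => ⟨h.1 hp.1, hp.2⟩) ?_, hM⟩
  exact Set.image_mono (f := Msg.fact) hM

lemma TState.groupCore {s : Set A × Set (Msg P A)} (hs : TState owner s.1 s.2) (G : Set P) :
    TState owner (groupCore owner G s).1 (groupCore owner G s).2 :=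
  fun m hm => ⟨(hs m hm.1).1, (hs m hm.1).2.1, Or.inr ⟨m, hm, rfl⟩⟩

lemma IsCompliantState.groupCore {s : Set A × Set (Msg P A)} (hs : IsCompliantState owner H s)
    (G : Set P) : IsCompliantState owner H (groupCore owner G s) :=
  ⟨hs.1.groupCore G, fun m hm => hs.2 m hm.1⟩

lemma groupCore_empty {s : Set A × Set (Msg P A)} (hs : TState owner s.1 s.2) :
    groupCore owner ∅ s = s := by
  refine Prod.ext ?_ (by simp [groupCore])
  refine (Set.union_subset (fun p hp => hp.1) ?_).antisymm fun p hp => Or.inl ⟨hp, by simp⟩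
  rintro _ ⟨m, ⟨hm, -⟩, rfl⟩
  exact (hs m hm).2.2

lemma indist_groupCore_singleton {s : Set A × Set (Msg P A)} (hs : TState owner s.1 s.2) (i : P) :
    indist owner i s (groupCore owner {i} s) := by
  refine ⟨?_, ?_⟩
  · ext p
    simp only [groupCore, Facts, Set.mem_singleton_iff, forall_eq, Set.mem_ofPred_eq,
      Set.mem_union]
    constructor
    · rintro ⟨hp, rfl⟩
      exact ⟨Or.inl ⟨hp, rfl⟩, rfl⟩
    · rintro ⟨⟨hp, -⟩ | ⟨m, ⟨hm, -⟩, rfl⟩, rfl⟩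
      · exact ⟨hp, rfl⟩
      · exact ⟨(hs m hm).2.2, rfl⟩
  · ext m
    simp [groupCore]

lemma groupCore_insert {s : Set A × Set (Msg P A)} (hs : TState owner s.1 s.2) (i : P)
    (S : Set P) : groupCore owner {i} (groupCore owner S s) = groupCore owner (insert i S) s := by
  have hM : {m ∈ {m ∈ s.2 | S ⊆ m.grp} | {i} ⊆ m.grp} = {m ∈ s.2 | insert i S ⊆ m.grp} := by
    ext m
    simp only [Set.mem_ofPred_eq, Set.insert_subset_iff, Set.singleton_subset_iff]
    tauto
  refine Prod.ext ?_ hM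
  simp only [groupCore, hM]
  ext p
  simp only [Facts, Set.mem_union, Set.mem_ofPred_eq, Set.mem_singleton_iff, forall_eq,
    Set.forall_mem_insert]
  constructor
  · rintro (⟨⟨hp, hpS⟩ | ⟨m, ⟨hm, hmS⟩, rfl⟩, hpi⟩ | hp)
    · exact .inl ⟨hp, hpi, hpS⟩
    · obtain ⟨hsender, howner, -⟩ := hs m hm
      have him : i ∈ m.grp := by rwa [← hpi, howner]
      exact .inr ⟨m, ⟨hm, Set.insert_subset him hmS⟩, rfl⟩
    · exact .inr hp
  · rintro (⟨hp, hpi, hpS⟩ | hp)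
    · exact .inl ⟨.inl ⟨hp, hpS⟩, hpi⟩
    · exact .inr hp

lemma reflTransGen_groupCore {s : Set A × Set (Msg P A)} (hs : TState owner s.1 s.2)
    {G : Set P} (hG : G.Finite) :
    Relation.ReflTransGen (fun u v => ∃ i ∈ G, indist owner i u v) s (groupCore owner G s) := by
  refine hG.induction_on_subset
    (motive := fun S _ => Relation.ReflTransGen _ s (groupCore owner S s)) G ?_ ?_
  · rw [groupCore_empty hs]
  · intro i S hi _ _ ih
    rw [← groupCore_insert hs]
    exact ih.tail ⟨i, hi, indist_groupCore_singleton (hs.groupCore S) i⟩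

lemma reach_groupCore {s : Set A × Set (Msg P A)} (hs : TState owner s.1 s.2)
    {G : Set P} (hGf : G.Finite) (hG : G.Nonempty) : reach owner G s (groupCore owner G s) := by
  obtain ⟨i, hi⟩ := hG
  have hfix : groupCore owner {i} (groupCore owner G s) = groupCore owner G s := by
    rw [groupCore_insert hs, Set.insert_eq_of_mem hi]
  refine Relation.TransGen.tail' (reflTransGen_groupCore hs hGf) ⟨i, hi, ?_⟩
  simpa only [hfix] using indist_groupCore_singleton (hs.groupCore G) i

lemma groupCore_le_of_reach {G : Set P} {s t : Set A × Set (Msg P A)} (h : reach owner G s t)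
    (ht : TState owner t.1 t.2) : groupCore owner G s ≤ t := by
  let Below (u : Set A × Set (Msg P A)) : Prop :=
    {p ∈ s.1 | ∀ i ∈ G, owner p = i} ⊆ u.1 ∧ {m ∈ s.2 | G ⊆ m.grp} ⊆ u.2
  have hstep : ∀ u v, (∃ i ∈ G, indist owner i u v) → Below u → Below v := by
    rintro u v ⟨i, hi, hV, hM⟩ ⟨hVu, hMu⟩
    refine ⟨fun p hp => ?_, fun m hm => ?_⟩
    · have : p ∈ {p ∈ v.1 | owner p = i} := hV ▸ ⟨hVu hp, hp.2 i hi⟩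
      exact this.1
    · have : m ∈ {m ∈ v.2 | i ∈ m.grp} := hM ▸ ⟨hMu hm, hm.2 hi⟩
      exact this.1
  have hbelow : Below t := by
    clear ht
    induction h with
    | single hst => exact hstep _ _ hst ⟨fun p hp => hp.1, fun m hm => hm.1⟩
    | tail _ hst ih => exact hstep _ _ hst ih
  refine ⟨Set.union_subset hbelow.1 ?_, hbelow.2⟩
  rintro _ ⟨m, hm, rfl⟩
  exact (ht m (hbelow.2 hm)).2.2

def SatMonotone (owner : A → P) (H : Set (Set P)) (φ : Form P A) : Prop :=
  ∀ ⦃s t : Set A × Set (Msg P A)⦄, IsCompliantState owner H s → IsCompliantState owner H t →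
    s ≤ t → sat owner H φ s.1 s.2 → sat owner H φ t.1 t.2

theorem sat_ck_iff_groupCore {G : Set P} (hGf : G.Finite) (hG : G.Nonempty) {ψ : Form P A}
    (hψ : SatMonotone owner H ψ) {s : Set A × Set (Msg P A)} (hs : IsCompliantState owner H s) :
    sat owner H (.ck G ψ) s.1 s.2 ↔
      sat owner H ψ (groupCore owner G s).1 (groupCore owner G s).2 := by
  have hcore := hs.groupCore G
  refine ⟨fun h => h _ _ hcore.1 hcore.2 (reach_groupCore hs.1 hGf hG), ?_⟩
  intro hψcore V' M' hV' hM' hreach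
  exact hψ hcore ⟨hV', hM'⟩ (groupCore_le_of_reach hreach hV') hψcore

theorem Positive.satMonotone [Finite P] {φ : Form P A} (hφ : Positive φ) :
    SatMonotone owner H φ := by
  induction φ with
  | atom p => exact fun s t _ _ hst h => hst.1 h
  | neg φ _ => exact hφ.elim
  | and φ ψ ihφ ihψ =>
    exact fun s t hs ht hst h => ⟨ihφ hφ.1 hs ht hst h.1, ihψ hφ.2 hs ht hst h.2⟩
  | or φ ψ ihφ ihψ =>
    exact fun s t hs ht hst h =>
      h.imp (ihφ hφ.1 hs ht hst) (ihψ hφ.2 hs ht hst)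
  | ck G ψ ih =>
    intro s t hs ht hst h
    rcases G.eq_empty_or_nonempty with rfl | hG
    · exact fun _ _ _ _ hreach => (not_reach_empty hreach).elim
    rw [sat_ck_iff_groupCore G.toFinite hG (ih hφ) hs] at h
    rw [sat_ck_iff_groupCore G.toFinite hG (ih hφ) ht]
    exact ih hφ (hs.groupCore G) (ht.groupCore G) (groupCore_mono G hst) h

end

theorem ck_distributes_over_disjunction {P A : Type} [Fintype P] (owner : A → P)
    (V : Set A) (M : Set (Msg P A)) (hS : TState owner V M)
    (G : Set P) (hG : G.Nonempty)
    (φ₁ φ₂ : Form P A) (h₁ : Positive φ₁) (h₂ : Positive φ₂) :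
    sat owner (completeH P) (.ck G (.or φ₁ φ₂)) V M ↔
      sat owner (completeH P) (.ck G φ₁) V M ∨
      sat owner (completeH P) (.ck G φ₂) V M := by
  have hs := hS.isCompliantState_completeH
  have h₁₂ : Positive (.or φ₁ φ₂) := ⟨h₁, h₂⟩
  exact (sat_ck_iff_groupCore G.toFinite hG h₁₂.satMonotone hs).trans <|
    (or_congr (sat_ck_iff_groupCore G.toFinite hG h₁.satMonotone hs)
      (sat_ck_iff_groupCore G.toFinite hG h₂.satMonotone hs)).symm
end

section
/- Common knowledge without communication of negative facts: Let N = {i,j,k}, H = {{i,j,k}}, and p ∈ At_k. Then the empty state (∅,∅) satisfies (∅,∅) ⊨_H C_{{i,j,k}} ¬K_j p arising from the fact that the only hyperarc containing j also contains i; in particular (∅,∅) ⊨_H K_i ¬K_j p. -/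
/-!
A message addressed to the whole group `{i, j, k}` is seen by every player, so each step of
indistinguishability preserves it; as this is the only hyperarc, every state reachable from the
empty state still has no messages. Without messages, `j` cannot tell a state from the same state
with `k`'s fact `p` removed, so `j` never knows `p`, and this holds throughout the reachable states.
-/

section

variable {P A : Type} (owner : A → P)

theorem mem_iff_of_indist {l : P} {s t : Set A × Set (Msg P A)} (h : indist owner l s t)
    {m : Msg P A} (hl : l ∈ m.grp) : m ∈ s.2 ↔ m ∈ t.2 := by
  simpa only [Set.mem_ofPred_eq, hl, and_true] using Set.ext_iff.mp h.2 m

theorem mem_iff_of_reach {G : Set P} {s t : Set A × Set (Msg P A)} (h : reach owner G s t)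
    {m : Msg P A} (hG : G ⊆ m.grp) : m ∈ s.2 ↔ m ∈ t.2 := by
  induction h with
  | single hst =>
    obtain ⟨l, hl, hst⟩ := hst
    exact mem_iff_of_indist owner hst (hG hl)
  | tail _ hst ih =>
    obtain ⟨l, hl, hst⟩ := hst
    exact ih.trans (mem_iff_of_indist owner hst (hG hl))

theorem eq_empty_of_reach_empty {H : Set (Set P)} {G : Set P} (hH : ∀ B ∈ H, G ⊆ B)
    {V V' : Set A} {M' : Set (Msg P A)} (hM' : HComp H M') (h : reach owner G (V, ∅) (V', M')) :
    M' = ∅ :=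
  Set.eq_empty_of_forall_notMem fun m hm =>
    Set.notMem_empty m ((mem_iff_of_reach owner h (hH _ (hM' m hm))).mpr hm)

theorem indist_diff_singleton {j : P} {p : A} (hj : owner p ≠ j) (V : Set A)
    (M : Set (Msg P A)) : indist owner j (V, M) (V \ {p}, M) := by
  refine ⟨?_, rfl⟩
  ext q
  simp only [Set.mem_ofPred_eq, Set.mem_sdiff, Set.mem_singleton_iff]
  constructor
  · rintro ⟨hq, rfl⟩
    exact ⟨⟨hq, fun hqp => hj (hqp ▸ rfl)⟩, rfl⟩
  · rintro ⟨⟨hq, -⟩, hoq⟩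
    exact ⟨hq, hoq⟩

theorem not_sat_knows_of_untold {H : Set (Set P)} {j : P} {p : A} (hj : owner p ≠ j)
    {V : Set A} {M : Set (Msg P A)} (hT : TState owner V M) (hH : HComp H M)
    (hp : ∀ m ∈ M, m.fact ≠ p) : ¬ sat owner H (.ck {j} (.atom p)) V M := by
  intro hK
  have hT' : TState owner (V \ {p}) M := fun m hm =>
    ⟨(hT m hm).1, (hT m hm).2.1, (hT m hm).2.2, hp m hm⟩
  exact (hK _ _ hT' hH (.single ⟨j, rfl, indist_diff_singleton owner hj V M⟩)).2 rfl

theorem sat_ck_not_knows_of_empty {H : Set (Set P)} {G : Set P} (hH : ∀ B ∈ H, G ⊆ B)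
    {j : P} {p : A} (hj : owner p ≠ j) (V : Set A) :
    sat owner H (.ck G (.neg (.ck {j} (.atom p)))) V ∅ := by
  intro V' M' hT hM' hreach
  obtain rfl := eq_empty_of_reach_empty owner hH hM' hreach
  exact not_sat_knows_of_untold owner hj hT hM' (fun _ hm => absurd hm (Set.notMem_empty _))

end

theorem ck_without_communication_general {P A : Type} (owner : A → P)
    (i j k : P) (hjk : j ≠ k)
    (hall : ∀ x : P, x = i ∨ x = j ∨ x = k)
    (p : A) (hp : owner p = k) :
    sat owner {({i, j, k} : Set P)}
        (.ck {i, j, k} (.neg (.ck {j} (.atom p)))) ∅ ∅ ∧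
    sat owner {({i, j, k} : Set P)}
        (.ck {i} (.neg (.ck {j} (.atom p)))) ∅ ∅ := by
  have hH : ∀ G : Set P, ∀ B ∈ ({({i, j, k} : Set P)} : Set (Set P)), G ⊆ B := by
    rintro G B rfl x -
    simpa using hall x
  have hj : owner p ≠ j := hp ▸ hjk.symm
  exact ⟨sat_ck_not_knows_of_empty owner (hH _) hj ∅, sat_ck_not_knows_of_empty owner (hH _) hj ∅⟩

theorem ck_without_communication {P A : Type} [Fintype P] (owner : A → P)
    (i j k : P) (hij : i ≠ j) (hik : i ≠ k) (hjk : j ≠ k)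
    (hall : ∀ x : P, x = i ∨ x = j ∨ x = k)
    (p : A) (hp : owner p = k) :
    sat owner {({i, j, k} : Set P)}
        (.ck {i, j, k} (.neg (.ck {j} (.atom p)))) ∅ ∅ ∧
    sat owner {({i, j, k} : Set P)}
        (.ck {i} (.neg (.ck {j} (.atom p)))) ∅ ∅ :=
  ck_without_communication_general owner i j k hjk hall p hp
end

section
/- Common knowledge of the hypergraph matters for negative formulas: With N = {i,j,k}, H = {{i,j,k}}, p ∈ At_k, the empty state satisfies (∅,∅) ⊨_H K_i ¬K_j p but (∅,∅) ⊭ K_i ¬K_j p, where ⊭ refers to semantics over the complete hypergraph (a witness is the state ({p}, {(k,{j,k},p)}), which is ∼_i-indistinguishable from (∅,∅) and satisfies K_j p). -/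
/-
The empty state sees no message, so under `H = {{i, j, k}}` every state `∼_i`-equivalent to it
is message-free as well (every message would be visible to `i`), and there `j` cannot know an
atom she does not own. Over the complete hypergraph, `k` may tell `p` to the group `{j, k}`
behind `i`'s back, which `i` cannot rule out.
-/

section Telling

variable {P A : Type} (owner : A → P)

lemma indist_trans {i : P} {s t u : Set A × Set (Msg P A)}
    (hst : indist owner i s t) (htu : indist owner i t u) : indist owner i s u :=
  ⟨hst.1.trans htu.1, hst.2.trans htu.2⟩

lemma indist_of_reach_singleton {i : P} {s t : Set A × Set (Msg P A)}
    (h : reach owner {i} s t) : indist owner i s t := by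
  induction h with
  | single h => obtain ⟨_, rfl, hst⟩ := h; exact hst
  | tail _ h ih => obtain ⟨_, rfl, htu⟩ := h; exact indist_trans owner ih htu

lemma tState_singleton {m : Msg P A} (hs : m.sender ∈ m.grp) (ho : owner m.fact = m.sender) :
    TState owner {m.fact} {m} := by
  rintro _ rfl
  exact ⟨hs, ho, rfl⟩

lemma indist_empty_singleton {i : P} {m : Msg P A} (hf : owner m.fact ≠ i) (hg : i ∉ m.grp) :
    indist owner i (∅, ∅) ({m.fact}, {m}) := by
  constructor <;> ext <;> simp_all

lemma eq_empty_of_indist_empty {H : Set (Set P)} {i : P} (hH : ∀ B ∈ H, i ∈ B)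
    {V V' : Set A} {M' : Set (Msg P A)} (hM' : HComp H M')
    (h : indist owner i (V, ∅) (V', M')) : M' = ∅ := by
  refine Set.eq_empty_of_forall_notMem fun m hm => ?_
  have hvis : m ∈ {m ∈ M' | i ∈ m.grp} := ⟨hm, hH _ (hM' m hm)⟩
  rw [← h.2] at hvis
  exact hvis.1

lemma not_sat_knows_atom_of_no_messages (H : Set (Set P)) {j : P} {p : A} (hp : owner p ≠ j)
    (V : Set A) : ¬ sat owner H (.ck {j} (.atom p)) V ∅ := by
  intro h
  have hj : indist owner j (V, ∅) ({q ∈ V | owner q = j}, ∅) :=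
    ⟨by ext; simp, rfl⟩
  exact hp (h _ ∅ (by simp [TState]) (by simp [HComp]) (.single ⟨j, rfl, hj⟩)).2

lemma sat_knows_atom_of_told (H : Set (Set P)) {j : P} {V : Set A} {M : Set (Msg P A)}
    {m : Msg P A} (hm : m ∈ M) (hj : j ∈ m.grp) :
    sat owner H (.ck {j} (.atom m.fact)) V M := by
  intro V' M' hT _ hr
  have hvis : m ∈ {m ∈ M' | j ∈ m.grp} := (indist_of_reach_singleton owner hr).2 ▸ ⟨hm, hj⟩
  exact (hT m hvis.1).2.2

end Telling

theorem ck_of_H_matters_for_negative_general {P A : Type} (owner : A → P)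
    (i j k : P) (hij : i ≠ j) (hik : i ≠ k) (hjk : j ≠ k)
    (p : A) (hp : owner p = k) :
    sat owner {({i, j, k} : Set P)}
        (.ck {i} (.neg (.ck {j} (.atom p)))) ∅ ∅ ∧
    ¬ sat owner (completeH P)
        (.ck {i} (.neg (.ck {j} (.atom p)))) ∅ ∅ := by
  refine ⟨fun V' M' _ hH hr => ?_, fun h => ?_⟩
  · obtain rfl : M' = ∅ :=
      eq_empty_of_indist_empty owner (by simp) hH (indist_of_reach_singleton owner hr)
    exact not_sat_knows_atom_of_no_messages owner _ (hp ▸ hjk.symm) V'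
  · let m : Msg P A := ⟨k, {j, k}, p⟩
    have hT : TState owner {p} {m} := tState_singleton owner (by simp [m]) hp
    have hi : indist owner i (∅, ∅) ({p}, {m}) :=
      indist_empty_singleton owner (m := m) (hp ▸ hik.symm) (by simp [m, hij, hik])
    exact h {p} {m} hT hT.hComp_completeH (.single ⟨i, rfl, hi⟩)
      (sat_knows_atom_of_told owner _ (m := m) rfl (by simp [m]))

theorem ck_of_H_matters_for_negative {P A : Type} [Fintype P] (owner : A → P)
    (i j k : P) (hij : i ≠ j) (hik : i ≠ k) (hjk : j ≠ k)
    (hall : ∀ x : P, x = i ∨ x = j ∨ x = k)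
    (p : A) (hp : owner p = k) :
    sat owner {({i, j, k} : Set P)}
        (.ck {i} (.neg (.ck {j} (.atom p)))) ∅ ∅ ∧
    ¬ sat owner (completeH P)
        (.ck {i} (.neg (.ck {j} (.atom p)))) ∅ ∅ :=
  ck_of_H_matters_for_negative_general owner i j k hij hik hjk p hp
end
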